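/- Let G be a group, let U be a normal subgroup of G, and let A be the center of U, regarded as a subgroup of G. Let H be a subgroup of G such that A·H = G (every element of G is a product of an element of A and an element of H). Then U ∩ H is a normal subgroup of G. -/

import Mathlib

/-!
Both `A` and `H` normalize `U ⊓ H`: the elements of `A` centralize `U`, hence `U ⊓ H`, while
`H` normalizes both `U` (which is normal) and itself. So the normalizer of `U ⊓ H` contains
`A · H = G`.
-/

namespace Subgroup

variable {G : Type*} [Group G]

theorem map_subtype_center_le_centralizer (U : Subgroup G) :
    (center U).map U.subtype ≤ centralizer U := by
  rintro _ ⟨a, ha, rfl⟩ x hx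
  exact congrArg Subtype.val (mem_center_iff.mp ha ⟨x, hx⟩)

theorem centralizer_le_normalizer_inf_left (U H : Subgroup G) :
    centralizer U ≤ normalizer ((U ⊓ H : Subgroup G) : Set G) :=
  (centralizer_le inf_le_left).trans (centralizer_le_normalizer _)

theorem le_normalizer_inf_right {U : Subgroup G} [U.Normal] (H : Subgroup G) :
    H ≤ normalizer ((U ⊓ H : Subgroup G) : Set G) :=
  (le_inf le_normalizer_of_normal le_normalizer).trans inf_normalizer_le_normalizer_inf

theorem normal_of_forall_eq_mul_of_le_normalizer {K A H : Subgroup G}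
    (hA : A ≤ normalizer (K : Set G)) (hH : H ≤ normalizer (K : Set G))
    (hAH : ∀ g : G, ∃ a ∈ A, ∃ h ∈ H, g = a * h) : K.Normal := by
  refine normalizer_eq_top_iff.mp (eq_top_iff.mpr fun g _ => ?_)
  obtain ⟨a, ha, h, hh, rfl⟩ := hAH g
  exact mul_mem (hA ha) (hH hh)

end Subgroup

/-- Let `U` be a normal subgroup of `G`, let `A` be the center of `U`
(viewed as a subgroup of `G`), and let `H ≤ G` satisfy `A·H = G`.
Then `U ⊓ H` is normal in `G`. -/
theorem inf_normal_of_center_mul_eq_top {G : Type*} [Group G]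
    (U H : Subgroup G) (hU : U.Normal)
    (hAH : ∀ g : G, ∃ a ∈ Subgroup.map U.subtype (Subgroup.center U),
      ∃ h ∈ H, g = a * h) :
    (U ⊓ H).Normal :=
  Subgroup.normal_of_forall_eq_mul_of_le_normalizer
    (U.map_subtype_center_le_centralizer.trans (U.centralizer_le_normalizer_inf_left H))
    (Subgroup.le_normalizer_inf_right H) hAH
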